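/- In sl(3,ℝ) with Lie bialgebra structure given by the r-matrix π = E₁₂∧E₂₁ + E₁₃∧E₃₁ + E₂₃∧E₃₂, the annihilator h° of the coisotropic subalgebra h = span{E₁₂, E₁₃, E₂₃, H₁-H₃} is a Lie subalgebra of g* (with bracket dual to δ = [π,·]) but is not a Lie ideal of g*. -/

import Mathlib

open ExteriorAlgebra

attribute [local instance 100] LieRing.ofAssociativeRing

/-- Auxiliary data packaging the Schouten bracket operations on the exterior algebra
`⋀• g` of a Lie algebra `g`, characterized by their values on decomposable elements:
* `bv X` is the Schouten bracket `[X, ·]` with an element of `g`, i.e. the unique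
  derivation of `⋀• g` extending `ad X`;
* `sb` is the Schouten bracket `[·,·] : ⋀² g × ⋀² g → ⋀³ g`;
* `pair ξ η` is the pairing of `ξ ∧ η ∈ ⋀² g*` with `⋀² g`;
* `sharp η ξ = ι_ξ η` is contraction of `η ∈ ⋀² g` with a covector `ξ`. -/
structure SchoutenData (R : Type*) [Field R] (L : Type*) [LieRing L] [LieAlgebra R L] where
  bv : L →ₗ[R] ExteriorAlgebra R L →ₗ[R] ExteriorAlgebra R L
  sb : ExteriorAlgebra R L →ₗ[R] ExteriorAlgebra R L →ₗ[R] ExteriorAlgebra R L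
  pair : Module.Dual R L →ₗ[R] Module.Dual R L →ₗ[R] ExteriorAlgebra R L →ₗ[R] R
  sharp : ExteriorAlgebra R L →ₗ[R] Module.Dual R L →ₗ[R] L
  bv_wedge2 : ∀ X u v : L, bv X (ιMulti R 2 ![u, v]) =
    ιMulti R 2 ![⁅X, u⁆, v] + ιMulti R 2 ![u, ⁅X, v⁆]
  bv_wedge3 : ∀ X u v t : L, bv X (ιMulti R 3 ![u, v, t]) =
    ιMulti R 3 ![⁅X, u⁆, v, t] + ιMulti R 3 ![u, ⁅X, v⁆, t] + ιMulti R 3 ![u, v, ⁅X, t⁆]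
  sb_wedge : ∀ u v x y : L, sb (ιMulti R 2 ![u, v]) (ιMulti R 2 ![x, y]) =
    ιMulti R 3 ![⁅u, x⁆, v, y] + ιMulti R 3 ![u, ⁅v, x⁆, y]
      - ιMulti R 3 ![x, ⁅u, y⁆, v] - ιMulti R 3 ![x, u, ⁅v, y⁆]
  pair_wedge : ∀ (ξ η : Module.Dual R L) (u v : L),
    pair ξ η (ιMulti R 2 ![u, v]) = ξ u * η v - ξ v * η u
  sharp_wedge : ∀ (u v : L) (ξ : Module.Dual R L),
    sharp (ιMulti R 2 ![u, v]) ξ = ξ u • v - ξ v • u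

/-! Every first factor `E_ij` (`i < j`) of `π = Σ E_ij ∧ E_ji` lies in `h`, and `h` is closed
under `[x, ·]` for `x ∈ h`. Since `[x, u ∧ v] = [x, u] ∧ v + u ∧ [x, v]`, each term of `δ(x)`
then has a factor in `h`, so it pairs to zero with `ξ ∧ η` whenever `ξ, η ∈ h°`.

The ideal property fails at `x = E₁₂`, `η = E₁₂*` and `ξ = (A ↦ A₂₂) ∈ h°`: the only surviving
term is `E₁₂ ∧ [E₁₂, E₂₁] = E₁₂ ∧ (H₁ - H₂)`, which pairs to `-1`. (Lean indices start at `0`.) -/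

open Matrix

theorem Matrix.lie_single_single {n α : Type*} [Fintype n] [DecidableEq n] [Ring α]
    (i j k l : n) :
    ⁅single i j (1 : α), single k l (1 : α)⁆ =
      (if j = k then single i l (1 : α) else 0) - (if l = i then single k j 1 else 0) := by
  rw [Ring.lie_def]
  congr 1 <;> split_ifs with h <;> simp [h, single_mul_single_of_ne]

theorem lie_mem_of_mem_span {R L : Type*} [CommRing R] [LieRing L] [LieAlgebra R L]
    {s : Set L} {N : Submodule R L} {u : L} (hs : ∀ x ∈ s, ⁅x, u⁆ ∈ N) {x : L}
    (hx : x ∈ Submodule.span R s) : ⁅x, u⁆ ∈ N :=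
  have hle : Submodule.span R s ≤
      N.comap ((LieModule.toEnd R L L : L →ₗ[R] Module.End R L).flip u) :=
    Submodule.span_le.mpr hs
  hle hx

namespace SchoutenData

variable {R L : Type*} [Field R] [LieRing L] [LieAlgebra R L] (S : SchoutenData R L)

theorem pair_bv_ιMulti_two (ξ η : Module.Dual R L) (x u v : L) :
    S.pair ξ η (S.bv x (ιMulti R 2 ![u, v])) =
      ξ ⁅x, u⁆ * η v - ξ v * η ⁅x, u⁆ + (ξ u * η ⁅x, v⁆ - ξ ⁅x, v⁆ * η u) := by
  rw [S.bv_wedge2, map_add, S.pair_wedge, S.pair_wedge]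

theorem pair_bv_ιMulti_two_eq_zero {h : Submodule R L} {ξ η : Module.Dual R L}
    (hξ : ∀ y ∈ h, ξ y = 0) (hη : ∀ y ∈ h, η y = 0) {x u : L} (hu : u ∈ h)
    (hxu : ⁅x, u⁆ ∈ h) (v : L) :
    S.pair ξ η (S.bv x (ιMulti R 2 ![u, v])) = 0 := by
  rw [pair_bv_ιMulti_two, hξ u hu, hη u hu, hξ _ hxu, hη _ hxu]
  ring

end SchoutenData

namespace Sl3

noncomputable abbrev rMatrix : ExteriorAlgebra ℝ (Matrix (Fin 3) (Fin 3) ℝ) :=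
  ιMulti ℝ 2 ![single 0 1 1, single 1 0 1] + ιMulti ℝ 2 ![single 0 2 1, single 2 0 1] +
    ιMulti ℝ 2 ![single 1 2 1, single 2 1 1]

noncomputable abbrev coisotropicSubalgebra : Submodule ℝ (Matrix (Fin 3) (Fin 3) ℝ) :=
  Submodule.span ℝ {single 0 1 1, single 0 2 1, single 1 2 1, single 0 0 1 - single 2 2 1}

local notation "𝔥" => coisotropicSubalgebra

theorem single_mem_coisotropicSubalgebra {i j : Fin 3} (hij : i < j) :
    single i j (1 : ℝ) ∈ 𝔥 := by
  apply Submodule.subset_span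
  fin_cases i <;> fin_cases j <;> simp_all

theorem lie_single_mem_coisotropicSubalgebra {x : Matrix (Fin 3) (Fin 3) ℝ} (hx : x ∈ 𝔥)
    {i j : Fin 3} (hij : i < j) : ⁅x, single i j 1⁆ ∈ 𝔥 := by
  refine lie_mem_of_mem_span (fun y hy => ?_) hx
  simp only [Set.mem_insert_iff, Set.mem_singleton_iff] at hy
  rcases hy with rfl | rfl | rfl | rfl <;> fin_cases i <;> fin_cases j <;>
    simp_all [Matrix.lie_single_single, sub_lie, single_mem_coisotropicSubalgebra, add_mem]

theorem pair_bv_rMatrix_eq_zero (S : SchoutenData ℝ (Matrix (Fin 3) (Fin 3) ℝ))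
    {ξ η : Module.Dual ℝ (Matrix (Fin 3) (Fin 3) ℝ)} (hξ : ∀ y ∈ 𝔥, ξ y = 0)
    (hη : ∀ y ∈ 𝔥, η y = 0) {x : Matrix (Fin 3) (Fin 3) ℝ} (hx : x ∈ 𝔥) :
    S.pair ξ η (S.bv x rMatrix) = 0 := by
  have key {i j : Fin 3} (hij : i < j) (v) := S.pair_bv_ιMulti_two_eq_zero hξ hη
    (single_mem_coisotropicSubalgebra hij) (lie_single_mem_coisotropicSubalgebra hx hij) v
  simp only [map_add, key (by decide : (0 : Fin 3) < 1),
    key (by decide : (0 : Fin 3) < 2), key (by decide : (1 : Fin 3) < 2), add_zero]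

theorem entryLinearMap_one_one_mem_dualAnnihilator :
    entryLinearMap ℝ ℝ (1 : Fin 3) (1 : Fin 3) ∈ Submodule.dualAnnihilator 𝔥 := by
  rw [← SetLike.mem_coe, Submodule.coe_dualAnnihilator_span]
  rintro y (rfl | rfl | rfl | rfl) <;> simp

theorem pair_entryLinearMap_bv_rMatrix (S : SchoutenData ℝ (Matrix (Fin 3) (Fin 3) ℝ)) :
    S.pair (entryLinearMap ℝ ℝ 0 1) (entryLinearMap ℝ ℝ 1 1) (S.bv (single 0 1 1) rMatrix) =
      -1 := by
  simp only [map_add, S.pair_bv_ιMulti_two, Matrix.lie_single_single]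
  simp

end Sl3

/-- In `sl(3,ℝ)` with the Lie bialgebra structure given by the r-matrix
`π = E₁₂∧E₂₁ + E₁₃∧E₃₁ + E₂₃∧E₃₂` (cobracket `δ(X)=[π,X]`, bracket on `g*` given by
`⟨[ξ,η],X⟩ = ⟨ξ∧η, δ(X)⟩`), the annihilator `h°` of the coisotropic subalgebra
`h = span{E₁₂, E₁₃, E₂₃, H₁-H₃}` is a Lie subalgebra of `g*` (first conjunct) but
not a Lie ideal of `g*` (second conjunct: some bracket of an arbitrary `η ∈ g*` with
some `ξ ∈ h°` fails to annihilate `h`). -/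
theorem sl3_annihilator_subalgebra_not_ideal
    (S : SchoutenData ℝ (Matrix (Fin 3) (Fin 3) ℝ)) :
    letI E : Fin 3 → Fin 3 → Matrix (Fin 3) (Fin 3) ℝ :=
      fun p q => Matrix.single p q 1
    letI π : ExteriorAlgebra ℝ (Matrix (Fin 3) (Fin 3) ℝ) :=
      ιMulti ℝ 2 ![E 0 1, E 1 0] + ιMulti ℝ 2 ![E 0 2, E 2 0] + ιMulti ℝ 2 ![E 1 2, E 2 1]
    letI h : Submodule ℝ (Matrix (Fin 3) (Fin 3) ℝ) :=
      Submodule.span ℝ {E 0 1, E 0 2, E 1 2, E 0 0 - E 2 2}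
    (∀ ξ η : Module.Dual ℝ (Matrix (Fin 3) (Fin 3) ℝ),
        (∀ x ∈ h, ξ x = 0) → (∀ x ∈ h, η x = 0) →
        ∀ x ∈ h, S.pair ξ η (S.bv x π) = 0) ∧
      (∃ η ξ : Module.Dual ℝ (Matrix (Fin 3) (Fin 3) ℝ),
        (∀ x ∈ h, ξ x = 0) ∧ ∃ x ∈ h, S.pair η ξ (S.bv x π) ≠ 0) := by
  refine ⟨fun ξ η hξ hη x hx => Sl3.pair_bv_rMatrix_eq_zero S hξ hη hx,
    entryLinearMap ℝ ℝ 0 1, entryLinearMap ℝ ℝ 1 1,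
    (Submodule.mem_dualAnnihilator _).mp Sl3.entryLinearMap_one_one_mem_dualAnnihilator,
    single 0 1 1, Sl3.single_mem_coisotropicSubalgebra (by decide), ?_⟩
  rw [Sl3.pair_entryLinearMap_bv_rMatrix]
  norm_num
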